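/- arXiv:1802.07200 — 3 statements merged into one kernel-verified Lean document; each statement's English description precedes it below -/
import Mathlib

section
/- Let R > 0, let Ω = {z ∈ ℂ : |z| < R}, and for z ∈ closure(Ω) set ρ(z) = R − |z|. Let w : closure(Ω) → ℝ be continuous and twice continuously differentiable on Ω, and let k, g : closure(Ω) → ℝ be continuous with k ≥ 4 everywhere, such that Δw − k²·w = g on Ω. Let 0 < γ < γ' < 4 and A ≥ 0 be such that |g(z)| ≤ A·e^{−γ'·ρ(z)} for all z ∈ Ω. Then there exists a constant K > 0, depending only on γ and γ' (and in particular not on R, w, k, g, or A), such that |w(z)| ≤ K·(M + A)·e^{−γ·ρ(z)} for all z ∈ Ω, where M = sup_{z ∈ ∂Ω} |w(z)|. -/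
/-- Directional derivative of `f : ℂ → E` at `z` in the direction `v ∈ ℂ`. -/
noncomputable def dirDeriv {E : Type*} [NormedAddCommGroup E] [NormedSpace ℝ E]
    (v : ℂ) (f : ℂ → E) (z : ℂ) : E :=
  deriv (fun t : ℝ => f (z + t • v)) 0

/-- The flat Laplacian `Δf = ∂²f/∂x² + ∂²f/∂y²` of a function on `ℂ ≅ ℝ²`
(applied componentwise when the target is `ℂ`). -/
noncomputable def flatLaplacian {E : Type*} [NormedAddCommGroup E] [NormedSpace ℝ E]
    (f : ℂ → E) (z : ℂ) : E :=
  dirDeriv 1 (dirDeriv 1 f) z + dirDeriv Complex.I (dirDeriv Complex.I f) z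

/-!
Take `β = γ'` and `a = 4β / (16 - β²)`. The radial formula `Δ F(|z|²) = 4 (|z|² F'' + F')`
gives, for `b(z) = exp (β √(|z|² + a²))`, the bound `Δb ≤ (β² + 2β/a) b = (16 - δ) b` with
`δ = (16 - β²) / 2 > 0`. Since `e^{β|z|} ≤ b(z) ≤ e^{βa} e^{β|z|}`, the multiple
`v = (M + A/δ) e^{-βR} b` dominates `|w|` on the circle and absorbs the source,
`Δv + |g| ≤ 16 v`, so the comparison principle for `Δ - k²` with `k² ≥ 16` gives
`|w| ≤ v ≤ (M + A/δ) e^{βa} e^{-γ' ρ} ≤ (M + A/δ) e^{βa} e^{-γ ρ}`.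
The comparison principle rests on `Δu ≤ 0` at an interior maximum of `u`, which is the
one-variable second-derivative test along the two coordinate lines.
-/

open Filter Metric Real Set Topology

theorem deriv_deriv_nonpos_of_isLocalMax {f : ℝ → ℝ} {x : ℝ} (hc : ContinuousAt f x)
    (hmax : IsLocalMax f x) : deriv (deriv f) x ≤ 0 := by
  -- If `f'' x > 0`, the second-derivative test makes `x` a local minimum as well, so `f` is
  -- locally constant and `f'' x = 0`.
  by_contra! hpos
  have hmin := isLocalMin_of_deriv_deriv_pos hpos hmax.deriv_eq_zero hc
  have hconst : f =ᶠ[𝓝 x] fun _ => f x := by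
    filter_upwards [hmin, hmax] with y hy₁ hy₂ using le_antisymm hy₂ hy₁
  have hderiv : deriv f =ᶠ[𝓝 x] fun _ => 0 := by
    filter_upwards [hconst.eventuallyEq_nhds] with y hy
    rw [hy.deriv_eq, deriv_const]
  rw [hderiv.deriv_eq, deriv_const] at hpos
  exact hpos.false

theorem deriv_deriv_sub {𝕜 F : Type*} [NontriviallyNormedField 𝕜] [NormedAddCommGroup F]
    [NormedSpace 𝕜 F] {f g : 𝕜 → F} {x : 𝕜} (hf : ContDiffAt 𝕜 2 f x)
    (hg : ContDiffAt 𝕜 2 g x) :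
    deriv (deriv fun t => f t - g t) x = deriv (deriv f) x - deriv (deriv g) x := by
  have hderiv : deriv (fun t => f t - g t) =ᶠ[𝓝 x] fun t => deriv f t - deriv g t := by
    filter_upwards [hf.eventually (by simp), hg.eventually (by simp)] with t hft hgt
    exact deriv_sub (hft.differentiableAt two_ne_zero) (hgt.differentiableAt two_ne_zero)
  rw [hderiv.deriv_eq]
  exact deriv_sub ((hf.derivWithin (m := 1) le_rfl).differentiableAt one_ne_zero)
    ((hg.derivWithin (m := 1) le_rfl).differentiableAt one_ne_zero)

theorem deriv_deriv_comp_quadratic {F F' : ℝ → ℝ} {F'' a b c : ℝ}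
    (hF : ∀ᶠ q in 𝓝 a, HasDerivAt F (F' q) q) (hF' : HasDerivAt F' F'' a) :
    deriv (deriv fun t => F (a + b * t + c * t ^ 2)) 0 = F'' * b ^ 2 + F' a * (2 * c) := by
  set q : ℝ → ℝ := fun t => a + b * t + c * t ^ 2
  have hq : ∀ t, HasDerivAt q (b + 2 * c * t) t := fun t => by
    simpa using ((hasDerivAt_id' t).const_mul b).const_add a |>.fun_add
      ((hasDerivAt_pow 2 t).const_mul c) |>.congr_deriv (by ring)
  have hq0 : q 0 = a := by simp [q]
  have hderiv : deriv (F ∘ q) =ᶠ[𝓝 0] fun t => F' (q t) * (b + 2 * c * t) := by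
    have hlim : Tendsto q (𝓝 0) (𝓝 a) := hq0 ▸ (hq 0).continuousAt.tendsto
    filter_upwards [hlim.eventually hF] with t ht using (ht.comp t (hq t)).deriv
  have hF'q : HasDerivAt (fun t => F' (q t)) (F'' * (b + 2 * c * 0)) 0 :=
    (hq0 ▸ hF').comp 0 (hq 0)
  rw [show (fun t => F (a + b * t + c * t ^ 2)) = F ∘ q from rfl, hderiv.deriv_eq,
    (hF'q.fun_mul ((hasDerivAt_id' (0 : ℝ)).const_mul (2 * c) |>.const_add b)).deriv, hq0]
  ring

theorem norm_add_smul_sq (z v : ℂ) (t : ℝ) :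
    ‖z + t • v‖ ^ 2
      = ‖z‖ ^ 2 + 2 * (z.re * v.re + z.im * v.im) * t + ‖v‖ ^ 2 * t ^ 2 := by
  simp only [Complex.sq_norm, Complex.normSq_apply, Complex.add_re, Complex.add_im,
    Complex.real_smul, Complex.re_ofReal_mul, Complex.im_ofReal_mul]
  ring

theorem dirDeriv_dirDeriv {E : Type*} [NormedAddCommGroup E] [NormedSpace ℝ E] (v : ℂ)
    (f : ℂ → E) (z : ℂ) :
    dirDeriv v (dirDeriv v f) z = deriv (deriv fun t : ℝ => f (z + t • v)) 0 := by
  have hline :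
      (fun t : ℝ => dirDeriv v f (z + t • v)) = deriv fun t : ℝ => f (z + t • v) := by
    ext t
    simpa [dirDeriv, add_smul, add_assoc] using
      deriv_comp_const_add (fun s : ℝ => f (z + s • v)) t 0
  rw [dirDeriv, hline]

theorem flatLaplacian_eq_deriv_deriv (f : ℂ → ℝ) (z : ℂ) :
    flatLaplacian f z = deriv (deriv fun t : ℝ => f (z + t • 1)) 0
      + deriv (deriv fun t : ℝ => f (z + t • Complex.I)) 0 := by
  rw [flatLaplacian, dirDeriv_dirDeriv, dirDeriv_dirDeriv]

theorem flatLaplacian_nonpos_of_isLocalMax {u : ℂ → ℝ} {z : ℂ} (hc : ContinuousAt u z)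
    (hmax : IsLocalMax u z) : flatLaplacian u z ≤ 0 := by
  have hdir : ∀ v : ℂ, deriv (deriv fun t : ℝ => u (z + t • v)) 0 ≤ 0 := fun v => by
    have hline : ContinuousAt (fun t : ℝ => z + t • v) 0 := by fun_prop
    have hz : z + (0 : ℝ) • v = z := by simp
    rw [← hz] at hc hmax
    exact deriv_deriv_nonpos_of_isLocalMax (hc.comp (f := fun t : ℝ => z + t • v) hline)
      (hmax.comp_continuous (g := fun t : ℝ => z + t • v) hline)
  rw [flatLaplacian_eq_deriv_deriv]
  linarith [hdir 1, hdir Complex.I]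

theorem flatLaplacian_const_mul (c : ℝ) (f : ℂ → ℝ) (z : ℂ) :
    flatLaplacian (fun z => c * f z) z = c * flatLaplacian f z := by
  simp only [flatLaplacian_eq_deriv_deriv, deriv_const_mul_field']
  ring

theorem flatLaplacian_neg (f : ℂ → ℝ) (z : ℂ) :
    flatLaplacian (fun z => -f z) z = -flatLaplacian f z := by
  simpa using flatLaplacian_const_mul (-1) f z

theorem flatLaplacian_sub {f g : ℂ → ℝ} {z : ℂ} (hf : ContDiffAt ℝ 2 f z)
    (hg : ContDiffAt ℝ 2 g z) :
    flatLaplacian (fun z => f z - g z) z = flatLaplacian f z - flatLaplacian g z := by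
  have hline : ∀ (h : ℂ → ℝ) (v : ℂ), ContDiffAt ℝ 2 h z →
      ContDiffAt ℝ 2 (fun t : ℝ => h (z + t • v)) 0 := fun h v hh =>
    ContDiffAt.comp (g := h) 0 (by simpa using hh) (by fun_prop)
  simp only [flatLaplacian_eq_deriv_deriv]
  rw [deriv_deriv_sub (hline f 1 hf) (hline g 1 hg),
    deriv_deriv_sub (hline f Complex.I hf) (hline g Complex.I hg)]
  ring

theorem flatLaplacian_comp_norm_sq {F F' : ℝ → ℝ} {F'' : ℝ} {z : ℂ}
    (hF : ∀ᶠ q in 𝓝 (‖z‖ ^ 2), HasDerivAt F (F' q) q)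
    (hF' : HasDerivAt F' F'' (‖z‖ ^ 2)) :
    flatLaplacian (fun z => F (‖z‖ ^ 2)) z = 4 * (‖z‖ ^ 2 * F'' + F' (‖z‖ ^ 2)) := by
  simp only [flatLaplacian_eq_deriv_deriv, norm_add_smul_sq, deriv_deriv_comp_quadratic hF hF']
  simp only [Complex.one_re, Complex.one_im, Complex.I_re, Complex.I_im, norm_one, Complex.norm_I,
    Complex.sq_norm, Complex.normSq_apply]
  ring

theorem flatLaplacian_exp_mul_sqrt_le {β a : ℝ} (hβ : 0 ≤ β) (ha : 0 < a) (z : ℂ) :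
    flatLaplacian (fun z => exp (β * √(‖z‖ ^ 2 + a ^ 2))) z
      ≤ (β ^ 2 + 2 * β / a) * exp (β * √(‖z‖ ^ 2 + a ^ 2)) := by
  set s : ℝ → ℝ := fun q => √(q + a ^ 2)
  have hs : ∀ q, 0 < q + a ^ 2 → HasDerivAt s (1 / (2 * s q)) q := fun q hq => by
    simpa using ((hasDerivAt_id' q).add_const (a ^ 2)).sqrt hq.ne'
  have hE : ∀ q, 0 < q + a ^ 2 →
      HasDerivAt (fun q => exp (β * s q)) (exp (β * s q) * (β * (1 / (2 * s q)))) q :=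
    fun q hq => ((hs q hq).const_mul β).exp
  set q₀ := ‖z‖ ^ 2 with hq₀_def
  have hq₀ : 0 < q₀ + a ^ 2 := by positivity
  have hs₀ : 0 < s q₀ := Real.sqrt_pos.mpr hq₀
  have hF : ∀ᶠ q in 𝓝 q₀, HasDerivAt (fun q => exp (β * s q))
      (β * exp (β * s q) / (2 * s q)) q := by
    filter_upwards [eventually_gt_nhds (show -a ^ 2 < q₀ by linarith)] with q hq
    exact (hE q (by linarith)).congr_deriv (by ring)
  have hF' := ((hE q₀ hq₀).const_mul β).fun_div ((hs q₀ hq₀).const_mul 2) (by positivity)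
  rw [flatLaplacian_comp_norm_sq (F := fun q => exp (β * s q)) hF hF', ← hq₀_def]
  have hsq : s q₀ ^ 2 = q₀ + a ^ 2 := Real.sq_sqrt hq₀.le
  have has : a ≤ s q₀ := Real.le_sqrt_of_sq_le (le_add_of_nonneg_left (by positivity))
  have hratio : q₀ / s q₀ ^ 2 ≤ 1 := by
    rw [div_le_one (by positivity), hsq]
    linarith [sq_nonneg a]
  calc _ = exp (β * s q₀)
        * (β ^ 2 * (q₀ / s q₀ ^ 2) - β * q₀ / s q₀ ^ 3 + 2 * β / s q₀) := by
        field_simp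
        ring
    _ ≤ exp (β * s q₀) * (β ^ 2 * 1 - 0 + 2 * β / a) := by
        gcongr
        positivity
    _ = _ := by ring

theorem nonpos_of_flatLaplacian_pos {S U : Set ℂ} (hS : IsCompact S) (hU : IsOpen U)
    (hUS : U ⊆ S) {u : ℂ → ℝ} (hu : ContinuousOn u S) (hbdry : ∀ z ∈ S \ U, u z ≤ 0)
    (hlap : ∀ z ∈ U, 0 < u z → 0 < flatLaplacian u z) : ∀ z ∈ S, u z ≤ 0 := by
  intro z hz
  obtain ⟨z₀, hz₀, hmax⟩ := hS.exists_isMaxOn ⟨z, hz⟩ hu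
  refine (hmax hz).trans (not_lt.mp fun hpos => ?_)
  by_cases hz₀U : z₀ ∈ U
  · have hS_nhds : S ∈ 𝓝 z₀ := mem_of_superset (hU.mem_nhds hz₀U) hUS
    exact (hlap z₀ hz₀U hpos).not_ge <| flatLaplacian_nonpos_of_isLocalMax
      (hu.continuousAt hS_nhds) (hmax.isLocalMax hS_nhds)
  · exact (hbdry z₀ ⟨hz₀, hz₀U⟩).not_gt hpos

theorem le_of_flatLaplacian_add_abs_le {S U : Set ℂ} (hS : IsCompact S) (hU : IsOpen U)
    (hUS : U ⊆ S) {w v q g : ℂ → ℝ} {c : ℝ} (hc : 0 < c) (hw : ContinuousOn w S)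
    (hw₂ : ContDiffOn ℝ 2 w U) (hv : ContinuousOn v S) (hv₂ : ContDiffOn ℝ 2 v U)
    (hv₀ : ∀ z ∈ U, 0 ≤ v z) (hq : ∀ z ∈ U, c ≤ q z)
    (hw_eq : ∀ z ∈ U, flatLaplacian w z - q z * w z = g z)
    (hv_le : ∀ z ∈ U, flatLaplacian v z + |g z| ≤ c * v z)
    (hbdry : ∀ z ∈ S \ U, w z ≤ v z) : ∀ z ∈ S, w z ≤ v z := by
  suffices ∀ z ∈ S, w z - v z ≤ 0 from fun z hz => sub_nonpos.mp (this z hz)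
  refine nonpos_of_flatLaplacian_pos hS hU hUS (hw.sub hv)
    (fun z hz => sub_nonpos.mpr (hbdry z hz)) fun z hz hpos => ?_
  have hz_nhds := hU.mem_nhds hz
  rw [flatLaplacian_sub (hw₂.contDiffAt hz_nhds) (hv₂.contDiffAt hz_nhds)]
  -- `w > v ≥ 0` here, so `Δ(w - v) ≥ q w + g - c v + |g| ≥ c (w - v) > 0`.
  have hw₀ : 0 ≤ w z := by linarith [hv₀ z hz]
  nlinarith [hw_eq z hz, hv_le z hz, hq z hz, neg_abs_le (g z), mul_pos hc hpos,
    mul_nonneg (sub_nonneg.mpr (hq z hz)) hw₀]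

theorem abs_le_of_flatLaplacian_add_abs_le {S U : Set ℂ} (hS : IsCompact S) (hU : IsOpen U)
    (hUS : U ⊆ S) {w v q g : ℂ → ℝ} {c : ℝ} (hc : 0 < c) (hw : ContinuousOn w S)
    (hw₂ : ContDiffOn ℝ 2 w U) (hv : ContinuousOn v S) (hv₂ : ContDiffOn ℝ 2 v U)
    (hv₀ : ∀ z ∈ U, 0 ≤ v z) (hq : ∀ z ∈ U, c ≤ q z)
    (hw_eq : ∀ z ∈ U, flatLaplacian w z - q z * w z = g z)
    (hv_le : ∀ z ∈ U, flatLaplacian v z + |g z| ≤ c * v z)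
    (hbdry : ∀ z ∈ S \ U, |w z| ≤ v z) : ∀ z ∈ S, |w z| ≤ v z := by
  have hpos := le_of_flatLaplacian_add_abs_le hS hU hUS hc hw hw₂ hv hv₂ hv₀ hq hw_eq hv_le
    fun z hz => (le_abs_self (w z)).trans (hbdry z hz)
  have hneg := le_of_flatLaplacian_add_abs_le (w := fun z => -w z) (g := fun z => -g z) hS hU
    hUS hc hw.neg hw₂.neg hv hv₂ hv₀ hq
    (fun z hz => by rw [flatLaplacian_neg, ← hw_eq z hz]; ring) (by simpa using hv_le)
    fun z hz => (neg_le_abs (w z)).trans (hbdry z hz)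
  exact fun z hz => abs_le'.mpr ⟨hpos z hz, hneg z hz⟩

theorem IsCompact.le_biSup_of_continuousOn {α : Type*} [TopologicalSpace α] {K : Set α}
    (hK : IsCompact K) {f : α → ℝ} (hf : ContinuousOn f K) {y : α} (hy : y ∈ K) :
    f y ≤ ⨆ x ∈ K, f x :=
  le_ciSup₂ (f := fun x (_ : x ∈ K) => f x)
    ((hK.bddAbove_image hf).mono fun r hr => by
      obtain ⟨x, hx, rfl⟩ := by simpa only [mem_iUnion, mem_range] using hr
      exact mem_image_of_mem f hx) y hy

theorem abs_le_mul_exp_neg_of_helmholtz {R β a c A M : ℝ} {w q g : ℂ → ℝ} (hβ : 0 ≤ β)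
    (ha : 0 < a) (hc : β ^ 2 + 2 * β / a < c) (hA : 0 ≤ A) (hM : 0 ≤ M)
    (hw : ContinuousOn w (closedBall 0 R)) (hw₂ : ContDiffOn ℝ 2 w (ball 0 R))
    (hq : ∀ z ∈ ball (0 : ℂ) R, c ≤ q z)
    (hw_eq : ∀ z ∈ ball (0 : ℂ) R, flatLaplacian w z - q z * w z = g z)
    (hg : ∀ z ∈ ball (0 : ℂ) R, |g z| ≤ A * exp (-β * (R - ‖z‖)))
    (hw_bdry : ∀ z ∈ sphere (0 : ℂ) R, |w z| ≤ M) {z : ℂ} (hz : z ∈ ball (0 : ℂ) R) :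
    |w z| ≤ (M + A / (c - (β ^ 2 + 2 * β / a))) * exp (β * a) * exp (-β * (R - ‖z‖)) := by
  set δ := c - (β ^ 2 + 2 * β / a)
  have hδ : 0 < δ := sub_pos.mpr hc
  have hMA : 0 ≤ M + A / δ := by positivity
  set v : ℂ → ℝ := fun y => (M + A / δ) * exp (-β * R) * exp (β * √(‖y‖ ^ 2 + a ^ 2))
  have hv_ge : ∀ y, (M + A / δ) * exp (-β * (R - ‖y‖)) ≤ v y := fun y => by
    have hs : ‖y‖ ≤ √(‖y‖ ^ 2 + a ^ 2) :=
      Real.le_sqrt_of_sq_le (le_add_of_nonneg_right (sq_nonneg a))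
    simp only [v, mul_assoc, ← exp_add]
    gcongr
    nlinarith
  have hv_le : ∀ y, v y ≤ (M + A / δ) * exp (β * a) * exp (-β * (R - ‖y‖)) := fun y => by
    have hs : √(‖y‖ ^ 2 + a ^ 2) ≤ ‖y‖ + a :=
      Real.sqrt_le_iff.mpr ⟨by positivity, by nlinarith [norm_nonneg y]⟩
    simp only [v, mul_assoc, ← exp_add]
    exact mul_le_mul_of_nonneg_left (exp_le_exp.mpr (by nlinarith)) hMA
  have hv : ContDiff ℝ 2 v := contDiff_const.mul <| (contDiff_const.mul <|
    ((contDiff_norm_sq ℝ).add contDiff_const).sqrt fun y => by positivity).exp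
  have hv_super : ∀ y ∈ ball (0 : ℂ) R, flatLaplacian v y + |g y| ≤ c * v y := by
    intro y hy
    have hlap : flatLaplacian v y ≤ (c - δ) * v y := by
      have h := flatLaplacian_const_mul ((M + A / δ) * exp (-β * R))
        (fun y => exp (β * √(‖y‖ ^ 2 + a ^ 2))) y
      rw [show c - δ = β ^ 2 + 2 * β / a by ring]
      simp only [v] at h ⊢
      rw [h, mul_left_comm]
      exact mul_le_mul_of_nonneg_left (flatLaplacian_exp_mul_sqrt_le hβ ha y) (by positivity)
    have hg_le : |g y| ≤ δ * v y := calc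
      |g y| ≤ A * exp (-β * (R - ‖y‖)) := hg y hy
      _ ≤ δ * ((M + A / δ) * exp (-β * (R - ‖y‖))) := by
        rw [← mul_assoc, mul_add, mul_div_cancel₀ A hδ.ne']
        gcongr
        linarith [mul_nonneg hδ.le hM]
      _ ≤ δ * v y := by gcongr; exact hv_ge y
    linarith
  have hv_bdry : ∀ y ∈ closedBall (0 : ℂ) R \ ball 0 R, |w y| ≤ v y := by
    intro y hy
    rw [closedBall_sdiff_ball] at hy
    have hMv := hv_ge y
    rw [mem_sphere_zero_iff_norm.mp hy, sub_self, mul_zero, exp_zero, mul_one] at hMv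
    linarith [hw_bdry y hy, div_nonneg hA hδ.le]
  calc |w z| ≤ v z := abs_le_of_flatLaplacian_add_abs_le (isCompact_closedBall 0 R) isOpen_ball
        ball_subset_closedBall ((by positivity : 0 ≤ β ^ 2 + 2 * β / a).trans_lt hc) hw hw₂
        hv.continuous.continuousOn hv.contDiffOn (fun y _ => by positivity) hq hw_eq hv_super
        hv_bdry z (ball_subset_closedBall hz)
    _ ≤ _ := hv_le z

/-- exponential decay principle, Theorem 5.1: on the disk of radius `R`,
if `(Δ − k²)w = g` with `k ≥ 4` and `|g| ≤ A e^{−γ' ρ}` where `ρ(z) = R − |z|`, then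
`|w| ≤ K (M + A) e^{−γ ρ}` where `M = sup_{∂Ω} |w|`, for a constant `K = K(γ, γ')`
independent of `R`, `w`, `k`, `g`, `A`. -/
theorem statement1 (γ γ' : ℝ) (hγ0 : 0 < γ) (hγγ' : γ < γ') (hγ'4 : γ' < 4) :
    ∃ K > (0 : ℝ), ∀ (R : ℝ), 0 < R →
      ∀ (w k g : ℂ → ℝ) (A : ℝ), 0 ≤ A →
      ContinuousOn w (Metric.closedBall (0 : ℂ) R) →
      ContDiffOn ℝ 2 w (Metric.ball (0 : ℂ) R) →
      ContinuousOn k (Metric.closedBall (0 : ℂ) R) →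
      ContinuousOn g (Metric.closedBall (0 : ℂ) R) →
      (∀ z ∈ Metric.closedBall (0 : ℂ) R, (4 : ℝ) ≤ k z) →
      (∀ z ∈ Metric.ball (0 : ℂ) R, flatLaplacian w z - (k z) ^ 2 * w z = g z) →
      (∀ z ∈ Metric.ball (0 : ℂ) R,
        |g z| ≤ A * Real.exp (-γ' * (R - ‖z‖))) →
      ∀ z ∈ Metric.ball (0 : ℂ) R,
        |w z| ≤ K * ((⨆ y ∈ Metric.sphere (0 : ℂ) R, |w y|) + A)
          * Real.exp (-γ * (R - ‖z‖)) := by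
  have hγ' : 0 < γ' := hγ0.trans hγγ'
  have hδ : 0 < 16 - γ' ^ 2 := by nlinarith
  set a := 4 * γ' / (16 - γ' ^ 2)
  have ha : 0 < a := by positivity
  have hc : 16 - (γ' ^ 2 + 2 * γ' / a) = (16 - γ' ^ 2) / 2 := by
    rw [show 2 * γ' / a = (16 - γ' ^ 2) / 2 by simp only [a]; field_simp; ring]
    ring
  refine ⟨(1 + 2 / (16 - γ' ^ 2)) * exp (γ' * a), by positivity, ?_⟩
  intro R _ w k g A hA hw hw₂ _ _ hk hpde hg z hz
  set M := ⨆ y ∈ sphere (0 : ℂ) R, |w y|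
  have hM : 0 ≤ M := Real.iSup_nonneg fun y => Real.iSup_nonneg fun _ => abs_nonneg (w y)
  have hw_bdry : ∀ y ∈ sphere (0 : ℂ) R, |w y| ≤ M := fun y hy =>
    (isCompact_sphere 0 R).le_biSup_of_continuousOn (hw.mono sphere_subset_closedBall).abs hy
  have hk_sq : ∀ y ∈ ball (0 : ℂ) R, 16 ≤ k y ^ 2 := fun y hy => by
    nlinarith [hk y (ball_subset_closedBall hy)]
  have hρ : 0 ≤ R - ‖z‖ := sub_nonneg.mpr (mem_ball_zero_iff.mp hz).le
  calc |w z| ≤ (M + A / ((16 - γ' ^ 2) / 2)) * exp (γ' * a) * exp (-γ' * (R - ‖z‖)) := by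
        simpa only [hc] using abs_le_mul_exp_neg_of_helmholtz hγ'.le ha (by linarith) hA hM hw
          hw₂ hk_sq hpde hg hw_bdry hz
    _ ≤ ((1 + 2 / (16 - γ' ^ 2)) * (M + A)) * exp (γ' * a) * exp (-γ * (R - ‖z‖)) := by
        gcongr
        rw [show A / ((16 - γ' ^ 2) / 2) = 2 / (16 - γ' ^ 2) * A by field_simp]
        nlinarith [mul_nonneg (by positivity : (0 : ℝ) ≤ 2 / (16 - γ' ^ 2)) hM]
    _ = _ := by ring
end

section
/- For z ∈ ℂ with |z| ≤ R set ρ(z) = R − |z|. (i) For all real numbers 0 < γ̃ < γ there exists a constant C > 0, depending only on γ and γ̃, such that for every R > 0 and every z with |z| ≤ R one has e^{−γ·ρ(z)} ≤ C · I₀(γ̃·|z|)/I₀(γ̃·R). (ii) For all real numbers 0 < γ < γ̃ there exists a constant C' > 0, depending only on γ and γ̃, such that for every R > 0 and every z with |z| ≤ R one has I₀(γ̃·|z|)/I₀(γ̃·R) ≤ C' · e^{−γ·ρ(z)}. -/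
/-!
Everything rests on the representation `I₀(x) = (2/π) ∫₀^{π/2} cosh (x cos θ) dθ`, obtained by
integrating the series of `cosh` termwise against Wallis' integrals. As `0 ≤ cos θ ≤ 1`, it gives
`I₀(x + u) ≤ eᵘ I₀(x)` for `u ≥ 0`, which is (i) with `C = 1`. For (ii) put `s = γ/γ̃` and
`θ₀ = arccos s`. For `x ≥ 0` the integrand decreases in `θ`, so `[0, θ₀]` carries at least the
fraction `θ₀/(π/2)` of the integral, and there `cos θ ≥ s`; hence
`I₀(x + u) ≥ (θ₀/π) e^{su} I₀(x)`, which is (ii) with `C' = π/θ₀`.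
-/

/-- The modified Bessel function of the first kind,
`I₀(x) = ∑ₖ (x/2)^(2k) / (k!)²`. -/
noncomputable def besselI0 (x : ℝ) : ℝ :=
  ∑' k : ℕ, (x / 2) ^ (2 * k) / (Nat.factorial k : ℝ) ^ 2

open Real intervalIntegral

open scoped Nat

lemma integral_cos_pow_two_mul (k : ℕ) :
    ∫ θ in (0:ℝ)..π / 2, cos θ ^ (2 * k) = π / 2 * (2 * k)! / (4 ^ k * (k ! : ℝ) ^ 2) := by
  induction k with
  | zero => simp
  | succ k ih =>
    rw [show 2 * (k + 1) = 2 * k + 2 by ring, integral_cos_pow, ih, Nat.factorial_succ,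
      show 2 * k + 2 = 2 * k + 1 + 1 by ring, Nat.factorial_succ, Nat.factorial_succ]
    simp only [cos_pi_div_two, sin_zero, mul_zero, sub_zero]
    push_cast
    field_simp
    ring

lemma besselI0_eq_integral (x : ℝ) :
    besselI0 x = 2 / π * ∫ θ in (0:ℝ)..π / 2, cosh (x * cos θ) := by
  have hterm : HasSum (fun k : ℕ ↦ ∫ θ in (0:ℝ)..π / 2, (x * cos θ) ^ (2 * k) / (2 * k)!)
      (∫ θ in (0:ℝ)..π / 2, cosh (x * cos θ)) := by
    refine hasSum_integral_of_dominated_convergence (fun k _ ↦ |x| ^ (2 * k) / (2 * k)!)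
      (fun k ↦ by fun_prop) (fun k ↦ .of_forall fun θ _ ↦ ?_)
      (.of_forall fun _ _ ↦ (hasSum_cosh |x|).summable) intervalIntegrable_const
      (.of_forall fun θ _ ↦ hasSum_cosh _)
    rw [norm_div, norm_pow, Real.norm_eq_abs, abs_mul, Real.norm_natCast]
    gcongr
    exact mul_le_of_le_one_right (abs_nonneg x) (abs_cos_le_one θ)
  refine ((hterm.mul_left (2 / π)).congr_fun fun k ↦ ?_).tsum_eq
  simp only [mul_pow, integral_div, integral_const_mul, integral_cos_pow_two_mul]
  rw [div_pow, pow_mul, pow_mul]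
  field_simp
  norm_num

lemma continuous_cosh_mul_cos (y : ℝ) : Continuous fun θ ↦ cosh (y * cos θ) := by fun_prop

lemma besselI0_pos (x : ℝ) : 0 < besselI0 x := by
  rw [besselI0_eq_integral]
  exact mul_pos (by positivity) (intervalIntegral_pos_of_pos_on
    ((continuous_cosh_mul_cos x).intervalIntegrable _ _) (fun θ _ ↦ cosh_pos _) (by positivity))

lemma cosh_add_le_exp_mul_cosh (a : ℝ) {b : ℝ} (hb : 0 ≤ b) :
    cosh (a + b) ≤ exp b * cosh a := by
  have : sinh a * sinh b ≤ cosh a * sinh b :=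
    mul_le_mul_of_nonneg_right (sinh_lt_cosh a).le (sinh_nonneg_iff.2 hb)
  rw [cosh_add, ← cosh_add_sinh b]
  linarith

lemma exp_mul_cosh_le_two_mul_cosh_add {a : ℝ} (ha : 0 ≤ a) (b : ℝ) :
    exp b * cosh a ≤ 2 * cosh (a + b) := by
  have hcosh : cosh a ≤ exp a := by
    rw [← cosh_add_sinh a]
    exact le_add_of_nonneg_right (sinh_nonneg_iff.2 ha)
  calc exp b * cosh a ≤ exp b * exp a := by gcongr
    _ = exp (a + b) := by rw [← exp_add, add_comm]
    _ ≤ 2 * cosh (a + b) := by rw [cosh_eq]; linarith [exp_pos (-(a + b))]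

lemma AntitoneOn.mul_integral_le_mul_integral {g : ℝ → ℝ} {A B : ℝ} (hA : 0 ≤ A)
    (hAB : A ≤ B) (hg : AntitoneOn g (Set.Icc 0 B)) :
    A * ∫ θ in (0:ℝ)..B, g θ ≤ B * ∫ θ in (0:ℝ)..A, g θ := by
  have hgA : AntitoneOn g (Set.uIcc 0 A) :=
    hg.mono (Set.uIcc_of_le hA ▸ Set.Icc_subset_Icc_right hAB)
  have hgAB : AntitoneOn g (Set.uIcc A B) :=
    hg.mono (Set.uIcc_of_le hAB ▸ Set.Icc_subset_Icc_left hA)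
  have hhead : A * g A ≤ ∫ θ in (0:ℝ)..A, g θ := by
    simpa using integral_mono_on (μ := MeasureTheory.volume) hA intervalIntegrable_const
      hgA.intervalIntegrable
      fun θ hθ ↦ hg ⟨hθ.1, hθ.2.trans hAB⟩ ⟨hA, hAB⟩ hθ.2
  have htail : ∫ θ in A..B, g θ ≤ (B - A) * g A := by
    simpa using integral_mono_on (μ := MeasureTheory.volume) hAB hgAB.intervalIntegrable
      intervalIntegrable_const
      fun θ hθ ↦ hg ⟨hA, hAB⟩ ⟨hA.trans hθ.1, hθ.2⟩ hθ.1
  rw [← integral_add_adjacent_intervals hgA.intervalIntegrable hgAB.intervalIntegrable]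
  nlinarith [mul_le_mul_of_nonneg_left hhead (sub_nonneg.2 hAB),
    mul_le_mul_of_nonneg_left htail hA]

lemma besselI0_add_le (x : ℝ) {u : ℝ} (hu : 0 ≤ u) :
    besselI0 (x + u) ≤ exp u * besselI0 x := by
  rw [besselI0_eq_integral, besselI0_eq_integral, mul_left_comm,
    ← integral_const_mul (exp u)]
  gcongr
  refine integral_mono_on (by positivity) ((continuous_cosh_mul_cos _).intervalIntegrable _ _)
    ((continuous_cosh_mul_cos _).const_mul _ |>.intervalIntegrable _ _) fun θ hθ ↦ ?_
  have hcos : cos θ ∈ Set.Icc 0 1 :=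
    ⟨cos_nonneg_of_mem_Icc ⟨by linarith [hθ.1, pi_pos], hθ.2⟩, cos_le_one θ⟩
  calc cosh ((x + u) * cos θ) = cosh (x * cos θ + u * cos θ) := by rw [add_mul]
    _ ≤ exp (u * cos θ) * cosh (x * cos θ) := cosh_add_le_exp_mul_cosh _ (by nlinarith [hcos.1])
    _ ≤ exp u * cosh (x * cos θ) := by gcongr; nlinarith [hcos.2]

lemma le_besselI0_add {x u s : ℝ} (hx : 0 ≤ x) (hu : 0 ≤ u) (hs₀ : 0 < s) (hs₁ : s < 1) :
    arccos s / π * (exp (s * u) * besselI0 x) ≤ besselI0 (x + u) := by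
  set θ₀ := arccos s
  have hθ₀ : 0 < θ₀ := arccos_pos.2 hs₁
  have hθ₀_le : θ₀ ≤ π / 2 := arccos_le_pi_div_two.2 hs₀.le
  have hcos_mem : ∀ θ ∈ Set.Icc 0 (π / 2), 0 ≤ cos θ := fun θ hθ ↦
    cos_nonneg_of_mem_Icc ⟨by linarith [hθ.1, pi_pos], hθ.2⟩
  have hshare : θ₀ * ∫ θ in (0:ℝ)..π / 2, cosh (x * cos θ)
      ≤ π / 2 * ∫ θ in (0:ℝ)..θ₀, cosh (x * cos θ) := by
    refine AntitoneOn.mul_integral_le_mul_integral hθ₀.le hθ₀_le fun θ₁ h₁ θ₂ h₂ h₁₂ ↦ ?_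
    have hcos₂ := hcos_mem θ₂ h₂
    have hcos₁₂ : cos θ₂ ≤ cos θ₁ :=
      cos_le_cos_of_nonneg_of_le_pi h₁.1 (by linarith [h₂.2, pi_pos]) h₁₂
    rw [cosh_le_cosh, abs_of_nonneg (by positivity), abs_of_nonneg (by nlinarith)]
    exact mul_le_mul_of_nonneg_left hcos₁₂ hx
  have hgain : exp (s * u) * ∫ θ in (0:ℝ)..θ₀, cosh (x * cos θ)
      ≤ 2 * ∫ θ in (0:ℝ)..θ₀, cosh ((x + u) * cos θ) := by
    rw [← integral_const_mul, ← integral_const_mul]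
    refine integral_mono_on hθ₀.le
      ((continuous_cosh_mul_cos _).const_mul _ |>.intervalIntegrable _ _)
      ((continuous_cosh_mul_cos _).const_mul _ |>.intervalIntegrable _ _) fun θ hθ ↦ ?_
    have hcos := hcos_mem θ ⟨hθ.1, hθ.2.trans hθ₀_le⟩
    have hs_le : s ≤ cos θ := by
      rw [← cos_arccos (by linarith) hs₁.le]
      exact cos_le_cos_of_nonneg_of_le_pi hθ.1 (by linarith [pi_pos]) hθ.2
    calc exp (s * u) * cosh (x * cos θ) ≤ exp (u * cos θ) * cosh (x * cos θ) := by
          gcongr exp ?_ * _; nlinarith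
      _ ≤ 2 * cosh (x * cos θ + u * cos θ) := exp_mul_cosh_le_two_mul_cosh_add (by positivity) _
      _ = 2 * cosh ((x + u) * cos θ) := by rw [add_mul]
  have hextend : ∫ θ in (0:ℝ)..θ₀, cosh ((x + u) * cos θ)
      ≤ ∫ θ in (0:ℝ)..π / 2, cosh ((x + u) * cos θ) :=
    integral_mono_interval le_rfl hθ₀.le hθ₀_le (.of_forall fun _ ↦ (cosh_pos _).le)
      ((continuous_cosh_mul_cos _).intervalIntegrable _ _)
  rw [besselI0_eq_integral, besselI0_eq_integral]
  calc θ₀ / π * (exp (s * u) * (2 / π * ∫ θ in (0:ℝ)..π / 2, cosh (x * cos θ)))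
      = 2 / π * (exp (s * u) * (θ₀ * ∫ θ in (0:ℝ)..π / 2, cosh (x * cos θ)) / π) := by ring
    _ ≤ 2 / π * (exp (s * u) * (π / 2 * ∫ θ in (0:ℝ)..θ₀, cosh (x * cos θ)) / π) := by gcongr
    _ = 2 / π * (exp (s * u) * (∫ θ in (0:ℝ)..θ₀, cosh (x * cos θ)) / 2) := by
      field_simp
    _ ≤ 2 / π * ∫ θ in (0:ℝ)..π / 2, cosh ((x + u) * cos θ) := by gcongr; linarith

lemma exp_neg_mul_le_besselI0_div {γ γt r R : ℝ} (hγt : 0 ≤ γt) (hγ : γt ≤ γ) (hrR : r ≤ R) :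
    exp (-γ * (R - r)) ≤ besselI0 (γt * r) / besselI0 (γt * R) := by
  have hgrowth := besselI0_add_le (γt * r) (mul_nonneg hγt (sub_nonneg.2 hrR))
  rw [← mul_add, add_sub_cancel] at hgrowth
  rw [le_div_iff₀ (besselI0_pos _)]
  calc exp (-γ * (R - r)) * besselI0 (γt * R)
      ≤ exp (-γ * (R - r)) * (exp (γt * (R - r)) * besselI0 (γt * r)) := by gcongr
    _ = exp ((γt - γ) * (R - r)) * besselI0 (γt * r) := by
      rw [← mul_assoc, ← exp_add]; ring_nf
    _ ≤ besselI0 (γt * r) := by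
      refine mul_le_of_le_one_left (besselI0_pos _).le (exp_le_one_iff.2 ?_)
      exact mul_nonpos_of_nonpos_of_nonneg (sub_nonpos.2 hγ) (sub_nonneg.2 hrR)

lemma besselI0_div_le {γ γt r R : ℝ} (hγ : 0 < γ) (hγt : γ < γt) (hr : 0 ≤ r) (hrR : r ≤ R) :
    besselI0 (γt * r) / besselI0 (γt * R) ≤ π / arccos (γ / γt) * exp (-γ * (R - r)) := by
  have hγt₀ : 0 < γt := hγ.trans hγt
  have hs : γ / γt < 1 := (div_lt_one hγt₀).2 hγt
  have hgrowth := le_besselI0_add (mul_nonneg hγt₀.le hr)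
    (mul_nonneg hγt₀.le (sub_nonneg.2 hrR)) (div_pos hγ hγt₀) hs
  rw [← mul_add, add_sub_cancel, ← mul_assoc (γ / γt), div_mul_cancel₀ _ hγt₀.ne'] at hgrowth
  have hθ₀ : 0 < arccos (γ / γt) := arccos_pos.2 hs
  rw [div_le_iff₀ (besselI0_pos _)]
  calc besselI0 (γt * r)
      = π / arccos (γ / γt) * exp (-γ * (R - r))
          * (arccos (γ / γt) / π * (exp (γ * (R - r)) * besselI0 (γt * r))) := by
        rw [neg_mul, exp_neg]
        field_simp
    _ ≤ π / arccos (γ / γt) * exp (-γ * (R - r)) * besselI0 (γt * R) := by gcongr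

/-- with `ρ(z) = R − |z|`:
(i) for `0 < γ̃ < γ` there is `C = C(γ, γ̃) > 0` with
`e^{−γρ(z)} ≤ C · I₀(γ̃|z|)/I₀(γ̃R)` whenever `|z| ≤ R`;
(ii) for `0 < γ < γ̃` there is `C' = C'(γ, γ̃) > 0` with
`I₀(γ̃|z|)/I₀(γ̃R) ≤ C' · e^{−γρ(z)}` whenever `|z| ≤ R`. -/
theorem statement4 :
    (∀ γ γt : ℝ, 0 < γt → γt < γ →
      ∃ C > (0 : ℝ), ∀ R : ℝ, 0 < R → ∀ z : ℂ, ‖z‖ ≤ R →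
        Real.exp (-γ * (R - ‖z‖))
          ≤ C * (besselI0 (γt * ‖z‖) / besselI0 (γt * R))) ∧
    (∀ γ γt : ℝ, 0 < γ → γ < γt →
      ∃ C' > (0 : ℝ), ∀ R : ℝ, 0 < R → ∀ z : ℂ, ‖z‖ ≤ R →
        besselI0 (γt * ‖z‖) / besselI0 (γt * R)
          ≤ C' * Real.exp (-γ * (R - ‖z‖))) := by
  refine ⟨fun γ γt hγt hγ ↦ ⟨1, one_pos, fun R _ z hz ↦ ?_⟩,
    fun γ γt hγ hγt ↦ ⟨π / arccos (γ / γt), ?_, fun R _ z hz ↦ ?_⟩⟩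
  · rw [one_mul]
    exact exp_neg_mul_le_besselI0_div hγt.le hγ.le hz
  · exact div_pos pi_pos (arccos_pos.2 ((div_lt_one (hγ.trans hγt)).2 hγt))
  · exact besselI0_div_le hγ hγt (norm_nonneg z) hz
end

section
/- Let R > 0, M > 0, and let D = {z ∈ ℂ : |z| < R}. Suppose u : closure(D) → ℝ is continuous, twice continuously differentiable on D, satisfies Δu = 8·sinh(2u) on D, and 0 ≤ u ≤ M on closure(D). Then for every γ with 0 < γ < 4 there exists a constant K > 0, depending only on γ and M (and not on R or u), such that |u(z)| ≤ K·e^{−γ·(R−|z|)} for all z ∈ D. -/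
open Filter Topology
open scoped Real

theorem dirDeriv_dirDeriv_eq_deriv_deriv {E : Type*} [NormedAddCommGroup E] [NormedSpace ℝ E]
    (f : ℂ → E) (v z : ℂ) :
    dirDeriv v (dirDeriv v f) z = deriv (deriv fun t : ℝ => f (z + t • v)) 0 := by
  have hline : (fun t : ℝ => dirDeriv v f (z + t • v)) = deriv fun t : ℝ => f (z + t • v) := by
    ext t
    simpa [dirDeriv, add_smul, add_assoc] using
      deriv_comp_const_add (fun s : ℝ => f (z + s • v)) t 0
  exact congrArg (deriv · 0) hline

theorem IsLocalMax.deriv_deriv_nonpos {h : ℝ → ℝ} {x : ℝ} (hmax : IsLocalMax h x)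
    (hc : ContinuousAt h x) : deriv (deriv h) x ≤ 0 := by
  by_contra! hpos
  have hmin := isLocalMin_of_deriv_deriv_pos hpos hmax.deriv_eq_zero hc
  have hconst : h =ᶠ[𝓝 x] fun _ => h x :=
    (hmin.and hmax).mono fun t ht => le_antisymm ht.2 ht.1
  rw [hconst.deriv.deriv_eq, deriv_const', deriv_const] at hpos
  exact hpos.false

theorem IsLocalMax.deriv_deriv_le_of_sub {φ ψ : ℝ → ℝ} {S : Set ℝ} {x : ℝ} (hS : IsOpen S)
    (hx : x ∈ S) (hφ : ContDiffOn ℝ 2 φ S) (hψ : ContDiffOn ℝ 2 ψ S)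
    (hmax : IsLocalMax (fun t => φ t - ψ t) x) :
    deriv (deriv φ) x ≤ deriv (deriv ψ) x := by
  have hderiv : ∀ {f : ℝ → ℝ}, ContDiffOn ℝ 2 f S → DifferentiableAt ℝ (deriv f) x := fun hf =>
    ((hf.deriv_of_isOpen hS (by norm_num : (1 : WithTop ℕ∞) + 1 ≤ 2)).differentiableOn
      one_ne_zero).differentiableAt (hS.mem_nhds hx)
  have hsub : deriv (fun t => φ t - ψ t) =ᶠ[𝓝 x] fun t => deriv φ t - deriv ψ t :=
    eventually_of_mem (hS.mem_nhds hx) fun t ht =>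
      deriv_sub ((hφ.differentiableOn two_ne_zero).differentiableAt (hS.mem_nhds ht))
        ((hψ.differentiableOn two_ne_zero).differentiableAt (hS.mem_nhds ht))
  have htest := hmax.deriv_deriv_nonpos ((hφ.sub hψ).continuousOn.continuousAt (hS.mem_nhds hx))
  rw [hsub.deriv_eq, deriv_fun_sub (hderiv hφ) (hderiv hψ)] at htest
  linarith

theorem IsLocalMax.flatLaplacian_le_of_sub {f g : ℂ → ℝ} {U : Set ℂ} {z : ℂ} (hU : IsOpen U)
    (hz : z ∈ U) (hf : ContDiffOn ℝ 2 f U) (hg : ContDiffOn ℝ 2 g U)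
    (hmax : IsLocalMax (fun w => f w - g w) z) :
    flatLaplacian f z ≤ flatLaplacian g z := by
  have hdir : ∀ v : ℂ, dirDeriv v (dirDeriv v f) z ≤ dirDeriv v (dirDeriv v g) z := by
    intro v
    have hline : ContDiff ℝ 2 fun t : ℝ => z + t • v := by fun_prop
    rw [dirDeriv_dirDeriv_eq_deriv_deriv, dirDeriv_dirDeriv_eq_deriv_deriv]
    refine IsLocalMax.deriv_deriv_le_of_sub (hU.preimage hline.continuous) (by simpa using hz)
      (hf.comp hline.contDiffOn (Set.mapsTo_preimage _ _))
      (hg.comp hline.contDiffOn (Set.mapsTo_preimage _ _)) ?_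
    exact IsLocalMax.comp_continuous (g := fun t : ℝ => z + t • v) (b := 0) (by simpa using hmax)
      hline.continuous.continuousAt
  exact add_le_add (hdir 1) (hdir Complex.I)

theorem le_on_closure_of_flatLaplacian_comparison {F : ℝ → ℝ} (hF : StrictMono F) {U : Set ℂ}
    (hU : IsOpen U) (hUb : Bornology.IsBounded U) {u w : ℂ → ℝ}
    (hu : ContinuousOn u (closure U)) (hw : ContinuousOn w (closure U))
    (hu₂ : ContDiffOn ℝ 2 u U) (hbarrier : ContDiffOn ℝ 2 w U)
    (hu_sub : ∀ z ∈ U, F (u z) ≤ flatLaplacian u z)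
    (hw_super : ∀ z ∈ U, flatLaplacian w z ≤ F (w z))
    (hbdry : ∀ z ∈ frontier U, u z ≤ w z) :
    ∀ z ∈ closure U, u z ≤ w z := by
  intro z hz
  obtain ⟨zm, hzm, hmax⟩ := hUb.isCompact_closure.exists_isMaxOn ⟨z, hz⟩ (hu.sub hw)
  suffices u zm ≤ w zm by linarith [show u z - w z ≤ u zm - w zm from hmax hz]
  by_cases hzmU : zm ∈ U
  · by_contra! hlt
    have hloc : IsLocalMax (fun z => u z - w z) zm :=
      hmax.isLocalMax (Filter.mem_of_superset (hU.mem_nhds hzmU) subset_closure)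
    linarith [hloc.flatLaplacian_le_of_sub hU hzmU hu₂ hbarrier, hF hlt, hu_sub zm hzmU,
      hw_super zm hzmU]
  · exact hbdry zm ⟨hzm, by rwa [hU.interior_eq]⟩

section ExpSum

variable {ι : Type*} (s : Finset ι) (c : ι → ℝ) (a : ι → ℂ) (z₀ : ℂ)

theorem dirDeriv_sum_exp_re (v : ℂ) :
    dirDeriv v (fun z => ∑ k ∈ s, c k * Real.exp (a k * (z - z₀)).re) =
      fun z => ∑ k ∈ s, c k * (a k * v).re * Real.exp (a k * (z - z₀)).re := by
  ext z
  have hline : (fun t : ℝ => ∑ k ∈ s, c k * Real.exp (a k * (z + t • v - z₀)).re) =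
      fun t => ∑ k ∈ s, c k * Real.exp ((a k * (z - z₀)).re + t * (a k * v).re) := by
    ext t
    simp only [Complex.real_smul, add_sub_right_comm z, mul_add, Complex.add_re,
      mul_left_comm (a _), Complex.re_ofReal_mul]
  refine HasDerivAt.deriv ?_
  rw [hline]
  refine HasDerivAt.fun_sum fun k _ => ?_
  have hk := (((hasDerivAt_mul_const (a k * v).re).const_add (a k * (z - z₀)).re).exp).const_mul
    (c k) (x := 0)
  rw [zero_mul, add_zero] at hk
  exact hk.congr_deriv (by ring)

theorem flatLaplacian_sum_exp_re (z : ℂ) :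
    flatLaplacian (fun z => ∑ k ∈ s, c k * Real.exp (a k * (z - z₀)).re) z =
      ∑ k ∈ s, ‖a k‖ ^ 2 * (c k * Real.exp (a k * (z - z₀)).re) := by
  simp only [flatLaplacian, dirDeriv_sum_exp_re, ← Finset.sum_add_distrib]
  refine Finset.sum_congr rfl fun k _ => ?_
  rw [← Complex.normSq_eq_norm_sq, Complex.normSq_apply]
  simp only [mul_one, Complex.mul_re, Complex.I_re, mul_zero, Complex.I_im, zero_sub, mul_neg,
    neg_mul, neg_neg]
  ring

theorem contDiff_sum_exp_re :
    ContDiff ℝ 2 fun z => ∑ k ∈ s, c k * Real.exp (a k * (z - z₀)).re :=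
  ContDiff.sum fun _ _ => contDiff_const.mul (Real.contDiff_exp.comp
    (Complex.reCLM.contDiff.comp (contDiff_const.mul (contDiff_id.sub contDiff_const))))

end ExpSum

theorem exists_mem_Icc_cos_mul_norm_le_re (n : ℕ) (hn : 0 < n) (ζ : ℂ) :
    ∃ k ∈ Finset.Icc (-n : ℤ) n,
      Real.cos (π / (2 * n)) * ‖ζ‖ ≤ (Complex.exp ((-(π * k / n) : ℝ) * Complex.I) * ζ).re := by
  have hn' : (0 : ℝ) < n := Nat.cast_pos.2 hn
  set φ := Complex.arg ζ
  set k : ℤ := round (φ * n / π)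
  have hround : |φ * n / π - k| ≤ 1 / 2 := abs_sub_round _
  have harg_lower : -(n : ℝ) < φ * n / π := by
    rw [lt_div_iff₀ Real.pi_pos]; nlinarith [Complex.neg_pi_lt_arg ζ]
  have harg_upper : φ * n / π ≤ n := by
    rw [div_le_iff₀ Real.pi_pos]; nlinarith [Complex.arg_le_pi ζ]
  refine ⟨k, Finset.mem_Icc.2 ⟨?_, ?_⟩, ?_⟩
  · have h : ((-(n : ℤ) - 1 : ℤ) : ℝ) < k := by push_cast; linarith [(abs_le.1 hround).2]
    have := Int.cast_lt.1 h; omega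
  · have h : (k : ℝ) < ((n + 1 : ℤ) : ℝ) := by push_cast; linarith [(abs_le.1 hround).1]
    have := Int.cast_lt.1 h; omega
  · have hangle : |φ - π * k / n| ≤ π / (2 * n) := by
      have : φ - π * k / n = (φ * n / π - k) * (π / n) := by field_simp
      rw [this, abs_mul, abs_of_pos (by positivity : 0 < π / n)]
      calc |φ * n / π - k| * (π / n) ≤ 1 / 2 * (π / n) := by gcongr
        _ = π / (2 * n) := by ring
    have hre : (Complex.exp ((-(π * k / n) : ℝ) * Complex.I) * ζ).re =
        ‖ζ‖ * Real.cos (φ - π * k / n) := by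
      conv_lhs => rw [← Complex.norm_mul_exp_arg_mul_I ζ]
      rw [mul_left_comm, ← Complex.exp_add, ← add_mul, ← Complex.ofReal_add,
        Complex.re_ofReal_mul, Complex.exp_ofReal_mul_I_re, neg_add_eq_sub]
    rw [hre, mul_comm, ← Real.cos_abs (φ - _)]
    have hle_pi : π / (2 * n) ≤ π :=
      div_le_self Real.pi_pos.le (by norm_cast; omega)
    gcongr
    exact Real.cos_le_cos_of_nonneg_of_le_pi (abs_nonneg _) hle_pi hangle

section Barrier

variable (n : ℕ) (C : ℝ) (z₀ : ℂ)

noncomputable def expBarrier (z : ℂ) : ℝ :=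
  ∑ k ∈ Finset.Icc (-n : ℤ) n,
    C * Real.exp (4 * Complex.exp ((-(π * k / n) : ℝ) * Complex.I) * (z - z₀)).re

theorem expBarrier_nonneg (hC : 0 ≤ C) (z : ℂ) : 0 ≤ expBarrier n C z₀ z :=
  Finset.sum_nonneg fun _ _ => mul_nonneg hC (Real.exp_pos _).le

theorem expBarrier_self : expBarrier n C z₀ z₀ = (2 * n + 1) * C := by
  have hcard : (Finset.Icc (-n : ℤ) n).card = 2 * n + 1 := by rw [Int.card_Icc]; omega
  simp only [expBarrier, sub_self, mul_zero, Complex.zero_re, Real.exp_zero, mul_one,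
    Finset.sum_const, nsmul_eq_mul, hcard]
  push_cast
  ring

theorem contDiff_expBarrier : ContDiff ℝ 2 (expBarrier n C z₀) :=
  contDiff_sum_exp_re _ _ _ z₀

theorem flatLaplacian_expBarrier (z : ℂ) :
    flatLaplacian (expBarrier n C z₀) z = 16 * expBarrier n C z₀ z := by
  unfold expBarrier
  rw [flatLaplacian_sum_exp_re, Finset.mul_sum]
  refine Finset.sum_congr rfl fun k _ => ?_
  rw [norm_mul, Complex.norm_exp_ofReal_mul_I]
  norm_num

theorem mul_exp_le_expBarrier_of_mem_sphere (hn : 0 < n) (hC : 0 ≤ C) {z : ℂ} {d : ℝ}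
    (hz : z ∈ Metric.sphere z₀ d) :
    C * Real.exp (4 * Real.cos (π / (2 * n)) * d) ≤ expBarrier n C z₀ z := by
  obtain ⟨k, hk, hcos⟩ := exists_mem_Icc_cos_mul_norm_le_re n hn (z - z₀)
  rw [mem_sphere_iff_norm.1 hz] at hcos
  refine le_trans ?_ (Finset.single_le_sum (fun k _ => mul_nonneg hC (Real.exp_pos _).le) hk)
  have h4 : ∀ w w' : ℂ, (4 * w * w').re = 4 * (w * w').re := fun w w' => by simp [mul_assoc]
  rw [h4, mul_assoc]
  gcongr

end Barrier

theorem le_mul_exp_neg_of_flatLaplacian_eq_sinh {u : ℂ → ℝ} {z₀ : ℂ} {d M : ℝ} (n : ℕ)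
    (hn : 0 < n) (hd : 0 < d) (hM : 0 ≤ M) (hu : ContinuousOn u (Metric.closedBall z₀ d))
    (hu₂ : ContDiffOn ℝ 2 u (Metric.ball z₀ d))
    (hΔu : ∀ z ∈ Metric.ball z₀ d, flatLaplacian u z = 8 * Real.sinh (2 * u z))
    (hu_le : ∀ z ∈ Metric.sphere z₀ d, u z ≤ M) :
    u z₀ ≤ (2 * n + 1) * M * Real.exp (-(4 * Real.cos (π / (2 * n)) * d)) := by
  set C := M * Real.exp (-(4 * Real.cos (π / (2 * n)) * d))
  have hC : 0 ≤ C := by positivity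
  have hbarrier := contDiff_expBarrier n C z₀
  have hF : StrictMono fun x : ℝ => 8 * Real.sinh (2 * x) :=
    (Real.sinh_strictMono.comp (strictMono_mul_left_of_pos two_pos)).const_mul
      (by norm_num : (0 : ℝ) < 8)
  have hsuper : ∀ z ∈ Metric.ball z₀ d,
      flatLaplacian (expBarrier n C z₀) z ≤ 8 * Real.sinh (2 * expBarrier n C z₀ z) := by
    intro z _
    rw [flatLaplacian_expBarrier]
    linarith [Real.self_le_sinh_iff.2 (mul_nonneg zero_le_two (expBarrier_nonneg n C z₀ hC z))]
  have hbdry : ∀ z ∈ frontier (Metric.ball z₀ d), u z ≤ expBarrier n C z₀ z := by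
    intro z hz
    rw [frontier_ball z₀ hd.ne'] at hz
    calc u z ≤ M := hu_le z hz
      _ = C * Real.exp (4 * Real.cos (π / (2 * n)) * d) := by
        rw [mul_assoc, ← Real.exp_add, neg_add_cancel, Real.exp_zero, mul_one]
      _ ≤ expBarrier n C z₀ z := mul_exp_le_expBarrier_of_mem_sphere n C z₀ hn hC hz
  have hcmp := le_on_closure_of_flatLaplacian_comparison hF Metric.isOpen_ball
    Metric.isBounded_ball (by rwa [closure_ball z₀ hd.ne']) hbarrier.continuous.continuousOn
    hu₂ hbarrier.contDiffOn (fun z hz => (hΔu z hz).ge) hsuper hbdry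
    z₀ (subset_closure (Metric.mem_ball_self hd))
  rwa [expBarrier_self, ← mul_assoc] at hcmp

theorem exists_pos_lt_four_mul_cos {γ : ℝ} (hγ : γ < 4) :
    ∃ n : ℕ, 0 < n ∧ γ < 4 * Real.cos (π / (2 * n)) := by
  have hlim : Tendsto (fun n : ℕ => 4 * Real.cos (π / (2 * n))) atTop (𝓝 4) := by
    have := ((Real.continuous_cos.tendsto 0).comp
      (tendsto_const_div_atTop_nhds_zero_nat (π / 2))).const_mul 4
    simpa [Function.comp_def, div_div] using this
  exact ((eventually_gt_atTop 0).and (hlim.eventually (lt_mem_nhds hγ))).exists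

theorem statement8_general (M γ : ℝ) (hM : 0 < M) (hγ4 : γ < 4) :
    ∃ K > (0 : ℝ), ∀ (R : ℝ), 0 < R → ∀ u : ℂ → ℝ,
      ContinuousOn u (Metric.closedBall (0 : ℂ) R) →
      ContDiffOn ℝ 2 u (Metric.ball (0 : ℂ) R) →
      (∀ z ∈ Metric.ball (0 : ℂ) R, flatLaplacian u z = 8 * Real.sinh (2 * u z)) →
      (∀ z ∈ Metric.closedBall (0 : ℂ) R, 0 ≤ u z ∧ u z ≤ M) →
      ∀ z ∈ Metric.ball (0 : ℂ) R,
        |u z| ≤ K * Real.exp (-γ * (R - ‖z‖)) := by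
  obtain ⟨n, hn, hγn⟩ := exists_pos_lt_four_mul_cos hγ4
  refine ⟨(2 * n + 1) * M, by positivity, fun R _ u hu hu₂ hΔu hu_bd z hz => ?_⟩
  have hd : 0 < R - ‖z‖ := sub_pos.2 (mem_ball_zero_iff.1 hz)
  have hball : Metric.ball z (R - ‖z‖) ⊆ Metric.ball 0 R :=
    Metric.ball_subset_ball' (by simp)
  have hclosedBall : Metric.closedBall z (R - ‖z‖) ⊆ Metric.closedBall 0 R :=
    Metric.closedBall_subset_closedBall' (by simp)
  have hdecay := le_mul_exp_neg_of_flatLaplacian_eq_sinh n hn hd hM.le (hu.mono hclosedBall)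
    (hu₂.mono hball) (fun w hw => hΔu w (hball hw))
    (fun w hw => (hu_bd w (hclosedBall (Metric.sphere_subset_closedBall hw))).2)
  rw [abs_of_nonneg (hu_bd z (Metric.ball_subset_closedBall hz)).1]
  refine hdecay.trans ?_
  gcongr
  rw [neg_mul]
  gcongr

/-- decay estimate for the density `u`: if `Δu = 8 sinh(2u)` on the
disk `{|z| < R}` and `0 ≤ u ≤ M` on its closure, then for every `0 < γ < 4` there is a
constant `K = K(γ, M) > 0`, independent of `R` and `u`, with
`|u(z)| ≤ K e^{−γ(R−|z|)}` on the disk. -/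
theorem statement8 (M γ : ℝ) (hM : 0 < M) (hγ0 : 0 < γ) (hγ4 : γ < 4) :
    ∃ K > (0 : ℝ), ∀ (R : ℝ), 0 < R → ∀ u : ℂ → ℝ,
      ContinuousOn u (Metric.closedBall (0 : ℂ) R) →
      ContDiffOn ℝ 2 u (Metric.ball (0 : ℂ) R) →
      (∀ z ∈ Metric.ball (0 : ℂ) R, flatLaplacian u z = 8 * Real.sinh (2 * u z)) →
      (∀ z ∈ Metric.closedBall (0 : ℂ) R, 0 ≤ u z ∧ u z ≤ M) →
      ∀ z ∈ Metric.ball (0 : ℂ) R,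
        |u z| ≤ K * Real.exp (-γ * (R - ‖z‖)) :=
  statement8_general M γ hM hγ4
end
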